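/- arXiv:2410.08547 — 2 statements merged into one kernel-verified Lean document; each statement's English description precedes it below -/
import Mathlib

section
/- Let N, n, j be positive integers, R a nonempty finite type with cardinality r = |R|, H : R → ZMod N a function, P : Fin n → Fin j a surjection, and e : ZMod N → ℂ the standard additive character e(a) = exp(2πi·a.val/N). For w : Fin j → ZMod N, let ψ_w : (Fin n → R) → ℂ be the tensor-product phase state ψ_w(x) = r^{-n/2} · e(∑_{i : Fin n} H(x i) * w (P i)). Then the averaged density matrix (1/N^j) · ∑_{w : Fin j → ZMod N} ψ_w · (ψ_w)† , a matrix indexed by (Fin n → R) × (Fin n → R), equals the matrix whose (x, x') entry is r^{-n} if for every k : Fin j one has ∑_{i : P i = k} H(x i) = ∑_{i : P i = k} H(x' i) (sums in ZMod N), and 0 otherwise. -/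
open Complex

/-- The standard additive character of `ZMod N`: `e(a) = exp(2πi·a.val/N)`. -/
noncomputable def stdChar (N : ℕ) (a : ZMod N) : ℂ :=
  Complex.exp (2 * Real.pi * Complex.I * (a.val : ℂ) / (N : ℂ))

lemma stdChar_eq_stdAddChar (N : ℕ) [NeZero N] (a : ZMod N) :
    stdChar N a = ZMod.stdAddChar a := by
  rw [ZMod.stdAddChar_apply, ZMod.toCircle_apply, stdChar]

lemma conj_stdAddChar (N : ℕ) [NeZero N] (a : ZMod N) :
    (starRingEnd ℂ) (ZMod.stdAddChar a) = ZMod.stdAddChar (-a) := by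
  rw [AddChar.map_neg_eq_inv, ZMod.stdAddChar_apply,
    ← Circle.coe_inv_eq_conj, Circle.coe_inv]

lemma addChar_map_sum {A M : Type*} [AddCommMonoid A] [CommMonoid M] (ψ : AddChar A M)
    {ι : Type*} (s : Finset ι) (f : ι → A) :
    ψ (∑ i ∈ s, f i) = ∏ i ∈ s, ψ (f i) := by
  classical
  induction s using Finset.cons_induction with
  | empty => simp
  | cons a s ha ih =>
    rw [Finset.sum_cons, Finset.prod_cons, AddChar.map_add_eq_mul, ih]

theorem averaged_phase_state_density_b0 (N n j : ℕ) (hN : 0 < N) [NeZero N] (hn : 0 < n) (hj : 0 < j)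
    (R : Type) [Fintype R] [Nonempty R] (H : R → ZMod N)
    (P : Fin n → Fin j) (hP : Function.Surjective P)
    (ψ : (Fin j → ZMod N) → (Fin n → R) → ℂ)
    (hψ : ∀ w x, ψ w x =
      ((Real.sqrt ((Fintype.card R : ℝ) ^ n))⁻¹ : ℂ) *
        stdChar N (∑ i, H (x i) * w (P i))) :
    ((1 / (N : ℂ) ^ j) •
        ∑ w : Fin j → ZMod N,
          Matrix.of fun x x' : Fin n → R => ψ w x * (starRingEnd ℂ) (ψ w x')) =
      Matrix.of fun x x' : Fin n → R =>
        if ∀ k : Fin j,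
            (∑ i ∈ Finset.univ.filter (fun i => P i = k), H (x i)) =
              (∑ i ∈ Finset.univ.filter (fun i => P i = k), H (x' i))
          then ((Fintype.card R : ℂ) ^ n)⁻¹ else 0 := by
  have hr : (0 : ℝ) < (Fintype.card R : ℝ) ^ n := by positivity
  set c : ℂ := ((Real.sqrt ((Fintype.card R : ℝ) ^ n))⁻¹ : ℂ) with hc
  have hcc : c * (starRingEnd ℂ) c = ((Fintype.card R : ℂ) ^ n)⁻¹ := by
    rw [hc, ← Complex.ofReal_inv, Complex.conj_ofReal, ← Complex.ofReal_mul,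
      ← mul_inv, Real.mul_self_sqrt hr.le]
    push_cast
    ring
  ext x x'
  simp only [Matrix.smul_apply, Matrix.sum_apply, Matrix.of_apply, smul_eq_mul]
  set d : Fin j → ZMod N := fun k =>
    (∑ i ∈ Finset.univ.filter (fun i => P i = k), H (x i)) -
      (∑ i ∈ Finset.univ.filter (fun i => P i = k), H (x' i)) with hd
  have hfiber : ∀ (y : Fin n → R) (w : Fin j → ZMod N),
      (∑ i, H (y i) * w (P i)) =
        ∑ k, (∑ i ∈ Finset.univ.filter (fun i => P i = k), H (y i)) * w k := by
    intro y w
    rw [← Finset.sum_fiberwise Finset.univ P (fun i => H (y i) * w (P i))]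
    refine Finset.sum_congr rfl fun k _ => ?_
    rw [Finset.sum_mul]
    exact Finset.sum_congr rfl fun i hi => by rw [(Finset.mem_filter.1 hi).2]
  have hterm : ∀ w : Fin j → ZMod N,
      ψ w x * (starRingEnd ℂ) (ψ w x') =
        ((Fintype.card R : ℂ) ^ n)⁻¹ * ∏ k : Fin j, ZMod.stdAddChar (w k * d k) := by
    intro w
    rw [hψ, hψ, stdChar_eq_stdAddChar, stdChar_eq_stdAddChar, map_mul, conj_stdAddChar]
    rw [show ∀ a b : ℂ, c * a * ((starRingEnd ℂ) c * b) = (c * (starRingEnd ℂ) c) * (a * b)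
      from fun a b => by ring, hcc, ← AddChar.map_add_eq_mul]
    congr 1
    rw [hfiber x w, hfiber x' w, ← Finset.sum_neg_distrib, ← Finset.sum_add_distrib,
      addChar_map_sum]
    refine Finset.prod_congr rfl fun k _ => ?_
    congr 1
    rw [hd]
    ring
  rw [Finset.sum_congr rfl fun w _ => hterm w, ← Finset.mul_sum,
    ← Fintype.prod_sum fun k (a : ZMod N) => ZMod.stdAddChar (a * d k)]
  have horth : ∀ k : Fin j,
      (∑ a : ZMod N, ZMod.stdAddChar (a * d k)) = if d k = 0 then (N : ℂ) else 0 := by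
    intro k
    have := AddChar.sum_mulShift (d k) (ZMod.isPrimitive_stdAddChar N)
    rw [this, ZMod.card N]
    split <;> simp
  rw [Finset.prod_congr rfl fun k _ => horth k]
  have hiff : (∀ k : Fin j,
      (∑ i ∈ Finset.univ.filter (fun i => P i = k), H (x i)) =
        (∑ i ∈ Finset.univ.filter (fun i => P i = k), H (x' i))) ↔ ∀ k, d k = 0 := by
    simp [hd, sub_eq_zero]
  by_cases h : ∀ k, d k = 0
  · rw [if_pos (hiff.mpr h)]
    rw [Finset.prod_congr rfl fun k _ => if_pos (h k), Finset.prod_const,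
      Finset.card_univ, Fintype.card_fin]
    have hN' : ((N : ℂ)) ^ j ≠ 0 := by
      apply pow_ne_zero
      exact_mod_cast hN.ne'
    field_simp
  · rw [if_neg (fun hh => h (hiff.mp hh))]
    obtain ⟨k, hk⟩ := not_forall.mp h
    have hz : (∏ k : Fin j, if d k = 0 then (N : ℂ) else 0) = 0 :=
      Finset.prod_eq_zero (Finset.mem_univ k) (if_neg hk)
    rw [hz, mul_zero, mul_zero]
end

section
/- Let N, n, j be positive integers, R a nonempty finite type with cardinality r = |R|, H : R → ZMod N a function, P : Fin n → Fin j a surjection, and e : ZMod N → ℂ the standard additive character e(a) = exp(2πi·a.val/N). For w : Fin j → ZMod N, let ψ_w : (Fin n → R) → ℂ be ψ_w(x) = r^{-n/2} · e(∑_{i : Fin n} H(x i) * w (P i)). For y : Fin j → ZMod N, let u_y : (Fin n → R) → ℂ be the indicator vector with u_y(x) = 1 if for every k one has ∑_{i : P i = k} H(x i) = y k, and u_y(x) = 0 otherwise. Then (1/N^j) · ∑_{w : Fin j → ZMod N} ψ_w · (ψ_w)† = r^{-n} · ∑_{y : Fin j → ZMod N} u_y · (u_y)† as matrices indexed by (Fin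 n → R) × (Fin n → R). -/
open Complex

private lemma addChar_sum_eq_prod {A : Type*} [AddCommMonoid A] {M : Type*} [CommMonoid M]
    (e : AddChar A M) {ι : Type*} (s : Finset ι) (f : ι → A) :
    e (∑ i ∈ s, f i) = ∏ i ∈ s, e (f i) := by
  induction s using Finset.cons_induction with
  | empty => simp
  | cons a s h ih => simp [Finset.sum_cons, Finset.prod_cons, AddChar.map_add_eq_mul, ih]

theorem density_matrix_lemma_b0 (N n j : ℕ) (hN : 0 < N) [NeZero N] (hn : 0 < n) (hj : 0 < j)
    (R : Type) [Fintype R] [Nonempty R] (H : R → ZMod N)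
    (P : Fin n → Fin j) (hP : Function.Surjective P)
    (ψ : (Fin j → ZMod N) → (Fin n → R) → ℂ)
    (hψ : ∀ w x, ψ w x =
      ((Real.sqrt ((Fintype.card R : ℝ) ^ n))⁻¹ : ℂ) *
        stdChar N (∑ i, H (x i) * w (P i)))
    (u : (Fin j → ZMod N) → (Fin n → R) → ℂ)
    (hu : ∀ y x, u y x =
      if ∀ k : Fin j, (∑ i ∈ Finset.univ.filter (fun i => P i = k), H (x i)) = y k
        then 1 else 0) :
    ((1 / (N : ℂ) ^ j) •
        ∑ w : Fin j → ZMod N,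
          Matrix.of fun x x' : Fin n → R => ψ w x * (starRingEnd ℂ) (ψ w x')) =
      ((Fintype.card R : ℂ) ^ n)⁻¹ •
        ∑ y : Fin j → ZMod N,
          Matrix.of fun x x' : Fin n → R => u y x * (starRingEnd ℂ) (u y x') := by
  classical
  -- identify stdChar with the mathlib standard additive character
  have hstd : ∀ a : ZMod N, stdChar N a = ZMod.stdAddChar a := by
    intro a
    rw [ZMod.stdAddChar_apply, ZMod.toCircle_apply, stdChar]
  set e : AddChar (ZMod N) ℂ := ZMod.stdAddChar with he
  have hconj : ∀ a : ZMod N, (starRingEnd ℂ) (e a) = e (-a) := by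
    intro a
    have hchar : 0 < ringChar (ZMod N) := by
      rw [ZMod.ringChar_zmod_n]; exact hN
    rw [AddChar.starComp_apply hchar, AddChar.inv_apply]
  -- block sums
  set S : (Fin n → R) → Fin j → ZMod N :=
    fun x k => ∑ i ∈ Finset.univ.filter (fun i => P i = k), H (x i) with hS
  have hsum : ∀ (x : Fin n → R) (w : Fin j → ZMod N),
      (∑ i, H (x i) * w (P i)) = ∑ k, S x k * w k := by
    intro x w
    rw [← Finset.sum_fiberwise Finset.univ P (fun i => H (x i) * w (P i))]
    refine Finset.sum_congr rfl fun k _ => ?_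
    rw [hS, Finset.sum_mul]
    refine Finset.sum_congr rfl fun i hi => ?_
    rw [(Finset.mem_filter.mp hi).2]
  -- constants
  have hrpos : (0:ℝ) < (Fintype.card R : ℝ) ^ n :=
    pow_pos (by exact_mod_cast Fintype.card_pos) n
  have hc2 : ((Real.sqrt ((Fintype.card R : ℝ) ^ n))⁻¹ : ℂ) *
      ((Real.sqrt ((Fintype.card R : ℝ) ^ n))⁻¹ : ℂ) = ((Fintype.card R : ℂ) ^ n)⁻¹ := by
    rw [← mul_inv, ← Complex.ofReal_mul, Real.mul_self_sqrt hrpos.le]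
    push_cast
    ring
  ext x x'
  simp only [Matrix.smul_apply, Matrix.sum_apply, Matrix.of_apply, smul_eq_mul]
  -- compute each summand of the LHS
  have hL : ∀ w : Fin j → ZMod N, ψ w x * (starRingEnd ℂ) (ψ w x') =
      ((Fintype.card R : ℂ) ^ n)⁻¹ * ∏ k, e ((S x k - S x' k) * w k) := by
    intro w
    rw [hψ, hψ, hstd, hstd, map_mul, hconj]
    rw [map_inv₀, Complex.conj_ofReal]
    have : e (∑ i, H (x i) * w (P i)) * e (-(∑ i, H (x' i) * w (P i))) =
        e (∑ k, (S x k - S x' k) * w k) := by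
      rw [← AddChar.map_add_eq_mul, hsum, hsum, ← Finset.sum_neg_distrib, ← Finset.sum_add_distrib]
      congr 1
      refine Finset.sum_congr rfl fun k _ => ?_
      ring
    calc ((Real.sqrt ((Fintype.card R : ℝ) ^ n))⁻¹ : ℂ) * e (∑ i, H (x i) * w (P i)) *
          (((Real.sqrt ((Fintype.card R : ℝ) ^ n))⁻¹ : ℂ) * e (-(∑ i, H (x' i) * w (P i))))
        = (((Real.sqrt ((Fintype.card R : ℝ) ^ n))⁻¹ : ℂ) *
            ((Real.sqrt ((Fintype.card R : ℝ) ^ n))⁻¹ : ℂ)) *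
          (e (∑ i, H (x i) * w (P i)) * e (-(∑ i, H (x' i) * w (P i)))) := by ring
      _ = ((Fintype.card R : ℂ) ^ n)⁻¹ * ∏ k, e ((S x k - S x' k) * w k) := by
          rw [hc2, this, addChar_sum_eq_prod]
  -- compute each summand of the RHS
  have hR : ∀ y : Fin j → ZMod N, u y x * (starRingEnd ℂ) (u y x') =
      if y = S x ∧ y = S x' then 1 else 0 := by
    intro y
    rw [hu, hu]
    have h1 : (∀ k : Fin j, (∑ i ∈ Finset.univ.filter (fun i => P i = k), H (x i)) = y k)
        ↔ y = S x := by
      constructor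
      · intro h; funext k; exact (h k).symm
      · intro h k; rw [h]
    have h2 : (∀ k : Fin j, (∑ i ∈ Finset.univ.filter (fun i => P i = k), H (x' i)) = y k)
        ↔ y = S x' := by
      constructor
      · intro h; funext k; exact (h k).symm
      · intro h k; rw [h]
    simp only [h1, h2]
    by_cases hxy : y = S x <;> by_cases hxy' : y = S x' <;> simp [hxy, hxy']
  -- sum over w on the LHS
  have hLsum : ∑ w : Fin j → ZMod N, ∏ k, e ((S x k - S x' k) * w k) =
      if S x = S x' then (N : ℂ) ^ j else 0 := by
    rw [show (∑ w : Fin j → ZMod N, ∏ k, e ((S x k - S x' k) * w k)) =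
        ∏ k, ∑ t : ZMod N, e ((S x k - S x' k) * t) from
      (Fintype.prod_sum fun k t => e ((S x k - S x' k) * t)).symm]
    have : ∀ k : Fin j, (∑ t : ZMod N, e ((S x k - S x' k) * t)) =
        if S x k - S x' k = 0 then (N : ℂ) else 0 := by
      intro k
      have := AddChar.sum_mulShift (ψ := e) (S x k - S x' k) (ZMod.isPrimitive_stdAddChar N)
      simp only [mul_comm] at this ⊢
      rw [this, ZMod.card]
      split <;> simp
    rw [Finset.prod_congr rfl (fun k _ => this k)]
    by_cases hss : S x = S x'
    · rw [Finset.prod_congr rfl (fun k _ => ?_), if_pos hss, Finset.prod_const,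
        Finset.card_univ, Fintype.card_fin]
      rw [if_pos (by rw [hss, sub_self])]
    · rw [if_neg hss]
      obtain ⟨k, hk⟩ : ∃ k, S x k ≠ S x' k := by
        by_contra h
        push_neg at h
        exact hss (funext h)
      exact Finset.prod_eq_zero (Finset.mem_univ k)
        (by rw [if_neg (sub_ne_zero.mpr hk)])
  -- sum over y on the RHS
  have hRsum : ∑ y : Fin j → ZMod N, (if y = S x ∧ y = S x' then (1:ℂ) else 0) =
      if S x = S x' then 1 else 0 := by
    by_cases hss : S x = S x'
    · rw [if_pos hss]
      rw [Finset.sum_eq_single (S x)]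
      · simp [hss]
      · intro y _ hy; simp [hy]
      · intro hy; exact absurd (Finset.mem_univ _) hy
    · rw [if_neg hss]
      refine Finset.sum_eq_zero fun y _ => ?_
      rw [if_neg]
      rintro ⟨rfl, h2⟩
      exact hss h2
  rw [Finset.sum_congr rfl (fun w _ => hL w), Finset.sum_congr rfl (fun y _ => hR y),
    ← Finset.mul_sum, hLsum, hRsum]
  have hNj : ((N:ℂ))^j ≠ 0 := pow_ne_zero _ (by exact_mod_cast hN.ne')
  by_cases hss : S x = S x'
  · rw [if_pos hss, if_pos hss]
    field_simp
  · rw [if_neg hss, if_neg hss]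
    simp
end
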